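/- With the random variables of the sampling-without-replacement scheme above, each block size X_k = Σ_{j=2}^N Y_{j(k-1)} δ_{jk} is binomially distributed with parameters N-1 and p₀ (for each fixed k ≤ B), where Y_{j0} = 1. -/

import Mathlib

/-!
Write `q m = p₀ / (1 - (m - 1) p₀)` for the parameter of `δ_{jm}`. Individual `j` falls into
block `k` exactly when its first success is at round `k`, an event of probability
`∏_{m < k} (1 - q m) · q k`: survival through the first `k - 1` rounds times the hazard `q k`.
The product telescopes, since `1 - q m = (1 - m p₀) / (1 - (m - 1) p₀)`, so this probability is
`(1 - (k - 1) p₀) · q k = p₀`. Distinct individuals use disjoint rows of the independent array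
`δ`, so these events are independent, and the number of individuals in block `k` is a sum of
`N - 1` independent Bernoulli(`p₀`) indicators; the binomial law of such a sum follows by
induction, one Vandermonde convolution per added indicator.
-/

open MeasureTheory ProbabilityTheory

attribute [local instance] Classical.propDecidable

open Finset

lemma sum_antidiagonal_binomial_mul (p : ℝ) (n k m : ℕ) :
    ∑ ij ∈ antidiagonal m, (n.choose ij.1 * p ^ ij.1 * (1 - p) ^ (n - ij.1)) *
        (k.choose ij.2 * p ^ ij.2 * (1 - p) ^ (k - ij.2)) =
      (n + k).choose m * p ^ m * (1 - p) ^ (n + k - m) := by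
  rw [Nat.add_choose_eq, Nat.cast_sum, sum_mul, sum_mul]
  refine sum_congr rfl fun ij hij => ?_
  rw [HasAntidiagonal.mem_antidiagonal] at hij
  by_cases hn : ij.1 ≤ n
  · by_cases hk : ij.2 ≤ k
    · rw [← hij, pow_add, show n + k - (ij.1 + ij.2) = (n - ij.1) + (k - ij.2) by omega, pow_add]
      push_cast
      ring
    · simp [Nat.choose_eq_zero_of_lt (not_le.mp hk)]
  · simp [Nat.choose_eq_zero_of_lt (not_le.mp hn)]

lemma prod_Icc_one_sub_div_one_sub_mul (p : ℝ) (n : ℕ) (h : ∀ m < n, 1 - (m : ℝ) * p ≠ 0) :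
    ∏ m ∈ Icc 1 n, (1 - p / (1 - ((m : ℝ) - 1) * p)) = 1 - n * p := by
  induction n with
  | zero => simp
  | succ n ih =>
    rw [prod_Icc_succ_top (by omega), ih fun m hm => h m (by omega)]
    have hn : 1 - (n : ℝ) * p ≠ 0 := h n (by omega)
    push_cast
    rw [add_sub_cancel_right]
    field_simp
    ring

lemma survival_mul_hazard_eq {p : ℝ} {k : ℕ} (hk : ((k : ℝ) + 1) * p ≤ 1) :
    (∏ m ∈ Icc 1 k, (1 - p / (1 - ((m : ℝ) - 1) * p))) *
      (p / (1 - (((k + 1 : ℕ) : ℝ) - 1) * p)) = p := by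
  have hkp : ∀ m ≤ k, (m : ℝ) * p < 1 := fun m hm => by
    have : (m : ℝ) ≤ k := by exact_mod_cast hm
    nlinarith
  rw [prod_Icc_one_sub_div_one_sub_mul p k fun m hm => (sub_pos.mpr (hkp m hm.le)).ne',
    Nat.cast_succ, add_sub_cancel_right, mul_div_cancel₀ _ (sub_pos.mpr (hkp k le_rfl)).ne']

lemma div_one_sub_mul_mem_Icc {p : ℝ} (hp : 0 ≤ p) {m : ℕ} (hm : (m : ℝ) * p ≤ 1) :
    p / (1 - ((m : ℝ) - 1) * p) ∈ Set.Icc 0 1 := by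
  have hden : p ≤ 1 - ((m : ℝ) - 1) * p := by linarith
  exact ⟨div_nonneg hp (hp.trans hden), div_le_one_of_le₀ hden (hp.trans hden)⟩

lemma natCast_mul_le_half {p : ℝ} (hp : 0 ≤ p) {B m : ℕ} (hpB : p ≤ 1 / (2 * B)) (hm : m ≤ B) :
    (m : ℝ) * p ≤ 1 / 2 := by
  rcases B.eq_zero_or_pos with rfl | hB
  · simp [Nat.le_zero.mp hm]
  have hB' : (0 : ℝ) < B := by exact_mod_cast hB
  calc (m : ℝ) * p ≤ B * (1 / (2 * B)) := by gcongr
    _ = 1 / 2 := by field_simp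

lemma setOf_first_true_eq_biInter {Ω ι : Type*} (δ : ι × ℕ → Ω → Bool) (j : ι) (k : ℕ) :
    {ω | (∀ m ∈ Icc 1 k, δ (j, m) ω = false) ∧ δ (j, k + 1) ω = true} =
      ⋂ m ∈ Icc 1 (k + 1), δ (j, m) ⁻¹' {decide (m = k + 1)} := by
  ext ω
  simp only [Set.mem_ofPred_eq, Set.mem_iInter, Set.mem_preimage, Set.mem_singleton_iff, mem_Icc]
  constructor
  · rintro ⟨hfalse, htrue⟩ m ⟨hm1, hmk⟩
    rcases Nat.lt_or_eq_of_le hmk with hlt | rfl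
    · simpa [hlt.ne] using hfalse m ⟨hm1, by omega⟩
    · simpa using htrue
  · intro h
    refine ⟨fun m hm => ?_, by simpa using h (k + 1) ⟨by omega, le_rfl⟩⟩
    simpa [show m ≠ k + 1 by omega] using h m ⟨hm.1, by omega⟩

namespace ProbabilityTheory

variable {Ω : Type*} [MeasurableSpace Ω] {μ : Measure Ω}

lemma IndepFun.measure_add_eq_sum_antidiagonal {U V : Ω → ℕ} (h : IndepFun U V μ)
    (hU : Measurable U) (hV : Measurable V) (m : ℕ) :
    μ {ω | U ω + V ω = m} = ∑ ij ∈ antidiagonal m, μ {ω | U ω = ij.1} * μ {ω | V ω = ij.2} := by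
  have hunion : {ω | U ω + V ω = m} =
      ⋃ ij ∈ antidiagonal m, {ω | U ω = ij.1} ∩ {ω | V ω = ij.2} := by
    ext ω; simp
  rw [hunion, measure_biUnion_finset]
  · exact sum_congr rfl fun ij _ =>
      h.measure_inter_preimage_eq_mul _ _ (measurableSet_singleton _) (measurableSet_singleton _)
  · intro ij _ ij' _ hne
    refine Set.disjoint_left.mpr fun ω h₁ h₂ => hne ?_
    simp only [Set.mem_inter_iff, Set.mem_ofPred_eq] at h₁ h₂
    exact Prod.ext (h₁.1.symm.trans h₂.1) (h₁.2.symm.trans h₂.2)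
  · exact fun ij _ => (hU (measurableSet_singleton _)).inter (hV (measurableSet_singleton _))

lemma measure_indicator_one_eq [IsProbabilityMeasure μ] {A : Set Ω} (hA : MeasurableSet A)
    {p : ℝ} (hp : 0 ≤ p) (hμA : μ A = ENNReal.ofReal p) (m : ℕ) :
    μ {ω | A.indicator 1 ω = m} =
      ENNReal.ofReal ((1 : ℕ).choose m * p ^ m * (1 - p) ^ (1 - m)) := by
  rcases m with _ | _ | m
  · have : {ω | A.indicator (1 : Ω → ℕ) ω = 0} = Aᶜ := by ext ω; simp
    rw [this, prob_compl_eq_one_sub hA, hμA, ← ENNReal.ofReal_one, ← ENNReal.ofReal_sub _ hp]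
    simp
  · have : {ω | A.indicator (1 : Ω → ℕ) ω = 1} = A := by ext ω; simp [Set.indicator_apply]
    simp [this, hμA]
  · have : {ω | A.indicator (1 : Ω → ℕ) ω = m + 2} = ∅ := by
      ext ω; by_cases hω : ω ∈ A <;> simp [hω]
    simp [this, Nat.choose_eq_zero_of_lt (show 1 < m + 2 by omega)]

theorem iIndepSet.measure_sum_indicator_eq {ι : Type*} [IsProbabilityMeasure μ] {A : ι → Set Ω}
    (hA : ∀ j, MeasurableSet (A j)) (h : iIndepSet A μ) {p : ℝ} (hp0 : 0 ≤ p) (hp1 : p ≤ 1)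
    (s : Finset ι) (hs : ∀ j ∈ s, μ (A j) = ENNReal.ofReal p) (n : ℕ) :
    μ {ω | ∑ j ∈ s, (A j).indicator (1 : Ω → ℕ) ω = n} =
      ENNReal.ofReal ((#s).choose n * p ^ n * (1 - p) ^ (#s - n)) := by
  have hX : ∀ j, Measurable ((A j).indicator (1 : Ω → ℕ)) :=
    fun j => measurable_one.indicator (hA j)
  have hnonneg : ∀ m l : ℕ, 0 ≤ (m.choose l : ℝ) * p ^ l * (1 - p) ^ (m - l) := by
    have : 0 ≤ 1 - p := by linarith
    intro m l; positivity
  induction s using Finset.induction_on generalizing n with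
  | empty => rcases n with _ | n <;> simp
  | @insert a s ha ih =>
    have hindep : IndepFun (∑ j ∈ s, (A j).indicator 1) ((A a).indicator (1 : Ω → ℕ)) μ :=
      h.iIndepFun_indicator.indepFun_finsetSum_of_notMem hX ha
    have hconv := hindep.measure_add_eq_sum_antidiagonal (by fun_prop) (hX a) n
    simp only [Finset.sum_apply] at hconv
    simp only [sum_insert ha, add_comm ((A a).indicator _ _)]
    rw [hconv, card_insert_of_notMem ha, ← sum_antidiagonal_binomial_mul,
      ENNReal.ofReal_sum_of_nonneg fun ij _ => mul_nonneg (hnonneg _ _) (hnonneg _ _)]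
    refine sum_congr rfl fun ij _ => ?_
    rw [ih (fun j hj => hs j (mem_insert_of_mem hj)),
      measure_indicator_one_eq (hA a) hp0 (hs a (mem_insert_self a s)),
      ENNReal.ofReal_mul (hnonneg _ _)]

section Rows

variable {ι κ β : Type*} [MeasurableSpace β] {f : ι × κ → Ω → β}

lemma iIndepFun.measure_biInter_rows (hf : iIndepFun f μ) (S : Finset ι) (K : Finset κ)
    {t : κ → Set β} (ht : ∀ m, MeasurableSet (t m)) :
    μ (⋂ j ∈ S, ⋂ m ∈ K, f (j, m) ⁻¹' t m) = ∏ j ∈ S, ∏ m ∈ K, μ (f (j, m) ⁻¹' t m) := by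
  have hprod : ⋂ j ∈ S, ⋂ m ∈ K, f (j, m) ⁻¹' t m = ⋂ x ∈ S ×ˢ K, f x ⁻¹' t x.2 := by
    ext ω
    simp only [Set.mem_iInter, Set.mem_preimage, mem_product, and_imp, Prod.forall]
    exact ⟨fun h j m hj hm => h j hj m hm, fun h j hj m hm => h j m hj hm⟩
  rw [hprod, hf.meas_biInter fun x _ => ⟨t x.2, ht x.2, rfl⟩, prod_product]

lemma iIndepFun.measure_biInter_row (hf : iIndepFun f μ) (j : ι) (K : Finset κ)
    {t : κ → Set β} (ht : ∀ m, MeasurableSet (t m)) :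
    μ (⋂ m ∈ K, f (j, m) ⁻¹' t m) = ∏ m ∈ K, μ (f (j, m) ⁻¹' t m) := by
  simpa using hf.measure_biInter_rows {j} K ht

lemma iIndepFun.iIndepSet_biInter_rows (hf : iIndepFun f μ) (hmeas : ∀ x, Measurable (f x))
    (K : Finset κ) {t : κ → Set β} (ht : ∀ m, MeasurableSet (t m)) :
    iIndepSet (fun j => ⋂ m ∈ K, f (j, m) ⁻¹' t m) μ := by
  rw [iIndepSet_iff_meas_biInter fun j =>
    Finset.measurableSet_biInter K fun m _ => hmeas (j, m) (ht m)]
  intro S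
  rw [hf.measure_biInter_rows S K ht]
  exact prod_congr rfl fun j _ => (hf.measure_biInter_row j K ht).symm

end Rows

section FirstTrue

variable {ι : Type*} {δ : ι × ℕ → Ω → Bool}

lemma measurableSet_first_true (hmeas : ∀ x, Measurable (δ x)) (j : ι) (k : ℕ) :
    MeasurableSet {ω | (∀ m ∈ Icc 1 k, δ (j, m) ω = false) ∧ δ (j, k + 1) ω = true} := by
  rw [setOf_first_true_eq_biInter]
  exact Finset.measurableSet_biInter _ fun m _ => hmeas _ (measurableSet_singleton _)

lemma iIndepFun.iIndepSet_first_true (hδ : iIndepFun δ μ) (hmeas : ∀ x, Measurable (δ x))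
    (k : ℕ) :
    iIndepSet (fun j => {ω | (∀ m ∈ Icc 1 k, δ (j, m) ω = false) ∧ δ (j, k + 1) ω = true}) μ := by
  simpa only [setOf_first_true_eq_biInter] using
    hδ.iIndepSet_biInter_rows hmeas (Icc 1 (k + 1)) fun _ => measurableSet_singleton _

lemma iIndepFun.measure_first_true_eq [IsProbabilityMeasure μ] (hδ : iIndepFun δ μ)
    (hmeas : ∀ x, Measurable (δ x)) (j : ι) (k : ℕ) {q : ℕ → ℝ}
    (hq : ∀ m ∈ Icc 1 (k + 1), μ {ω | δ (j, m) ω = true} = ENNReal.ofReal (q m))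
    (hq0 : ∀ m ∈ Icc 1 (k + 1), 0 ≤ q m) (hq1 : ∀ m ∈ Icc 1 k, q m ≤ 1) :
    μ {ω | (∀ m ∈ Icc 1 k, δ (j, m) ω = false) ∧ δ (j, k + 1) ω = true} =
      ENNReal.ofReal ((∏ m ∈ Icc 1 k, (1 - q m)) * q (k + 1)) := by
  have hsub : Icc 1 k ⊆ Icc 1 (k + 1) := Icc_subset_Icc_right (by omega)
  have hfalse : ∀ m ∈ Icc 1 k,
      μ (δ (j, m) ⁻¹' {decide (m = k + 1)}) = ENNReal.ofReal (1 - q m) := by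
    intro m hm
    have hmk : m ≠ k + 1 := by have := (mem_Icc.mp hm).2; omega
    have hcompl : δ (j, m) ⁻¹' {false} = {ω | δ (j, m) ω = true}ᶜ := by ext; simp
    rw [decide_eq_false hmk, hcompl,
      prob_compl_eq_one_sub (s := {ω | δ (j, m) ω = true}) (hmeas _ (measurableSet_singleton _)),
      hq m (hsub hm), ENNReal.ofReal_sub _ (hq0 m (hsub hm)), ENNReal.ofReal_one]
  have htrue : μ (δ (j, k + 1) ⁻¹' {true}) = ENNReal.ofReal (q (k + 1)) :=
    hq (k + 1) (right_mem_Icc.mpr (by omega))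
  rw [setOf_first_true_eq_biInter, hδ.measure_biInter_row j _ fun _ => measurableSet_singleton _,
    prod_Icc_succ_top (by omega), decide_eq_true (rfl : k + 1 = k + 1), prod_congr rfl hfalse,
    ← ENNReal.ofReal_prod_of_nonneg fun m hm => sub_nonneg.mpr (hq1 m hm), htrue,
    ← ENNReal.ofReal_mul (prod_nonneg fun m hm => sub_nonneg.mpr (hq1 m hm))]

end FirstTrue

end ProbabilityTheory

theorem block_size_binomial_general
    {Ω : Type*} [MeasurableSpace Ω] (μ : Measure Ω) [IsProbabilityMeasure μ]
    (B N : ℕ) (p₀ : ℝ) (hp0 : 0 < p₀) (hpB : p₀ ≤ 1 / (2 * B))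
    (δ : ℕ × ℕ → Ω → Bool)
    (hmeas : ∀ jk, Measurable (δ jk))
    (hindep : iIndepFun δ μ)
    (hbern : ∀ j ∈ Finset.Icc 2 N, ∀ k ∈ Finset.Icc 1 B,
      μ {ω | δ (j, k) ω = true} =
        ENNReal.ofReal (p₀ / (1 - ((k : ℝ) - 1) * p₀)))
    (k : ℕ) (hk : k ∈ Finset.Icc 1 B) :
    ∀ i : ℕ,
      μ {ω | (∑ j ∈ Finset.Icc 2 N,
          if (∀ m ∈ Finset.Icc 1 (k - 1), δ (j, m) ω = false) ∧
              δ (j, k) ω = true then 1 else 0) = i} =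
        ENNReal.ofReal
          (((N - 1).choose i : ℝ) * p₀ ^ i * (1 - p₀) ^ (N - 1 - i)) := by
  intro i
  obtain ⟨hk1, hkB⟩ := mem_Icc.mp hk
  obtain ⟨k, rfl⟩ : ∃ k', k = k' + 1 := ⟨k - 1, by omega⟩
  have hmp : ∀ m ≤ k + 1, (m : ℝ) * p₀ ≤ 1 := fun m hm =>
    (natCast_mul_le_half hp0.le hpB (hm.trans hkB)).trans (by norm_num)
  have hq : ∀ m ∈ Icc 1 (k + 1), p₀ / (1 - ((m : ℝ) - 1) * p₀) ∈ Set.Icc 0 1 :=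
    fun m hm => div_one_sub_mul_mem_Icc hp0.le (hmp m (mem_Icc.mp hm).2)
  have hjoin : ∀ j ∈ Icc 2 N, μ {ω | (∀ m ∈ Icc 1 k, δ (j, m) ω = false) ∧
      δ (j, k + 1) ω = true} = ENNReal.ofReal p₀ := fun j hj => by
    rw [hindep.measure_first_true_eq hmeas j k
      (fun m hm => hbern j hj m (Icc_subset_Icc_right hkB hm)) (fun m hm => (hq m hm).1)
      (fun m hm => (hq m (Icc_subset_Icc_right (by omega) hm)).2),
      survival_mul_hazard_eq (by exact_mod_cast hmp (k + 1) le_rfl)]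
  have hbin := (hindep.iIndepSet_first_true hmeas k).measure_sum_indicator_eq
    (measurableSet_first_true hmeas · k) hp0.le (by simpa using hmp 1 (by omega)) (Icc 2 N) hjoin i
  rw [Nat.card_Icc, show N + 1 - 2 = N - 1 by omega] at hbin
  convert hbin using 5 with ω
  exact sum_congr rfl fun j _ => by simp [Set.indicator_apply]

/-- Block sizes in the sampling-without-replacement scheme are binomial:
with independent Bernoulli variables `δ_{jk}` of parameter `p₀/(1-(k-1)p₀)`
and survival indicators `Y_{jk} = Π_{m=1}^k (1-δ_{jm})` (with `Y_{j0} = 1`),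
the block size `X_k = Σ_{j=2}^N Y_{j(k-1)} δ_{jk}` is binomially distributed
with parameters `N-1` and `p₀`. -/
theorem block_size_binomial
    {Ω : Type*} [MeasurableSpace Ω] (μ : Measure Ω) [IsProbabilityMeasure μ]
    (B N : ℕ) (p₀ : ℝ) (hp0 : 0 < p₀) (hpB : p₀ ≤ 1 / (2 * B)) (hB : 1 ≤ B)
    (hN : 2 ≤ N)
    (δ : ℕ × ℕ → Ω → Bool)
    (hmeas : ∀ jk, Measurable (δ jk))
    (hindep : iIndepFun δ μ)
    (hbern : ∀ j ∈ Finset.Icc 2 N, ∀ k ∈ Finset.Icc 1 B,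
      μ {ω | δ (j, k) ω = true} =
        ENNReal.ofReal (p₀ / (1 - ((k : ℝ) - 1) * p₀)))
    (k : ℕ) (hk : k ∈ Finset.Icc 1 B) :
    ∀ i : ℕ,
      μ {ω | (∑ j ∈ Finset.Icc 2 N,
          if (∀ m ∈ Finset.Icc 1 (k - 1), δ (j, m) ω = false) ∧
              δ (j, k) ω = true then 1 else 0) = i} =
        ENNReal.ofReal
          (((N - 1).choose i : ℝ) * p₀ ^ i * (1 - p₀) ^ (N - 1 - i)) :=
  block_size_binomial_general μ B N p₀ hp0 hpB δ hmeas hindep hbern k hk
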